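/- Let d, K ≥ 1, η > 0, δ > 0, and let μ be a probability measure on ℝ^d with finite (2+η)-th moment which assigns zero mass to every affine hyperplane. Let (X_i)_{i≥0} be i.i.d. random variables with law μ on a probability space (Ω, F, P), and let (γ_i)_{i≥0} ⊂ (0,1) satisfy Σ_i γ_i = ∞ and Σ_i γ_i^{1+δ} < ∞. Define the CLVQ recursion: x^{(0)} ∈ (ℝ^d)^K has pairwise distinct components; at step i, let k_win(i) be the least index k minimizing ‖X_i − x_k^{(i)}‖, set x_k^{(i+1)} = (1 − γ_i) x_k^{(i)} + γ_i X_i if k = k_win(i) and x_k^{(i+1)} = x_k^{(i)} otherwise. Assume that almost surely the grids x^{(i)} converge to a grid x* with pairwise distinct components at which the quadratic distortion G_{K,μ} is differentiable with gradient zero. Then almost surely the moving average of the empirical quadratic distortion converges to the limiting distortion: (1/t) Σ_{i=1}^{t} min_{1≤k≤K} ‖X_i − x_k^{(i)}‖² → G_{K,μ}(x*) as t → ∞. -/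

import Mathlib

open MeasureTheory RealInnerProductSpace Filter

/-- The quadratic distortion of a quantization grid `x` w.r.t. `μ`. -/
noncomputable def distortion {d : ℕ} (μ : Measure (EuclideanSpace ℝ (Fin d))) (K : ℕ)
    (x : Fin K → EuclideanSpace ℝ (Fin d)) : ℝ :=
  ∫ y, (⨅ i : Fin K, ‖y - x i‖ ^ 2) ∂μ

/-- `μ` assigns zero mass to every affine hyperplane. -/
def NullOnHyperplanes {d : ℕ} (μ : Measure (EuclideanSpace ℝ (Fin d))) : Prop :=
  ∀ u : EuclideanSpace ℝ (Fin d), u ≠ 0 → ∀ c : ℝ, μ {y | ⟪y, u⟫ = c} = 0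

/-!
The strong law of large numbers gives, almost surely and simultaneously for all grids `w` in a
countable dense set, `t⁻¹ ∑ᵢ quantError w (Xᵢ) → ∫ quantError w dμ`, as well as
`t⁻¹ ∑ᵢ ‖Xᵢ‖ → ∫ ‖y‖ dμ`. As `|quantError z y - quantError w y| ≤ (2‖y‖ + ‖z‖ + ‖w‖) dist z w`,
the latter makes the empirical distortions an equicontinuous family of functions of the grid, so the
convergence extends to every grid at which the distortion is continuous, such as `x*`. Replacing
`x*` by the grids `x⁽ⁱ⁾ → x*` then changes the sum by `∑ᵢ (‖Xᵢ‖ + 1) · o(1) = o(t)`.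
-/

open Topology Finset Asymptotics ProbabilityTheory

lemma tendsto_cesaro_zero_of_isLittleO {f c : ℕ → ℝ} {L : ℝ} (hc : ∀ i, 1 ≤ c i)
    (hcL : Tendsto (fun n : ℕ => (n : ℝ)⁻¹ * ∑ i ∈ range n, c i) atTop (𝓝 L))
    (hf : f =o[atTop] c) :
    Tendsto (fun n : ℕ => (n : ℝ)⁻¹ * ∑ i ∈ range n, f i) atTop (𝓝 0) := by
  have hsum_top : Tendsto (fun n => ∑ i ∈ range n, c i) atTop atTop :=
    tendsto_atTop_mono (fun n => by simpa using card_nsmul_le_sum (range n) c 1 fun i _ => hc i)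
      tendsto_natCast_atTop_atTop
  have hsum_bigO : (fun n => ∑ i ∈ range n, c i) =O[atTop] fun n : ℕ => (n : ℝ) := by
    refine (hcL.isBigO_one ℝ |>.mul (isBigO_refl (fun n : ℕ => (n : ℝ)) atTop)).congr' ?_ (by simp)
    filter_upwards [eventually_ne_atTop 0] with n hn
    field_simp
  have := ((hf.sum_range (fun i => zero_le_one.trans (hc i)) hsum_top).trans_isBigO
    hsum_bigO).tendsto_div_nhds_zero
  simpa only [div_eq_inv_mul] using this

lemma strong_law_ae_comp {Ω E : Type*} [MeasurableSpace Ω] {P : Measure Ω}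
    [MeasurableSpace E] {μ : Measure E} {X : ℕ → Ω → E} (hXmeas : ∀ i, Measurable (X i))
    (hXindep : iIndepFun X P) (hXlaw : ∀ i, P.map (X i) = μ) {g : E → ℝ} (hg : Measurable g)
    (hgint : Integrable g μ) :
    ∀ᵐ ω ∂P, Tendsto (fun n : ℕ => (n : ℝ)⁻¹ * ∑ i ∈ range n, g (X i ω)) atTop
      (𝓝 (∫ y, g y ∂μ)) := by
  have hident : ∀ i, IdentDistrib (g ∘ X i) (g ∘ X 0) P P := fun i =>
    (IdentDistrib.mk (hXmeas i).aemeasurable (hXmeas 0).aemeasurable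
      (by rw [hXlaw, hXlaw])).comp hg
  have hint : Integrable (g ∘ X 0) P :=
    (integrable_map_measure hg.aestronglyMeasurable (hXmeas 0).aemeasurable).mp
      (hXlaw 0 ▸ hgint)
  have hmean : P[g ∘ X 0] = ∫ y, g y ∂μ := by
    rw [← hXlaw 0, integral_map (hXmeas 0).aemeasurable hg.aestronglyMeasurable]
    rfl
  filter_upwards [strong_law_ae_real (fun i => g ∘ X i) hint
    (fun i j hij => (hXindep.comp (fun _ => g) fun _ => hg).indepFun hij) hident] with ω hω
  rw [hmean] at hω
  simpa only [div_eq_inv_mul, Function.comp_apply] using hω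

lemma abs_ciInf_sub_ciInf_le {ι : Type*} [Finite ι] [Nonempty ι] {f g : ι → ℝ} {c : ℝ}
    (h : ∀ i, |f i - g i| ≤ c) : |(⨅ i, f i) - ⨅ i, g i| ≤ c := by
  have key : ∀ f g : ι → ℝ, (∀ i, |f i - g i| ≤ c) → (⨅ i, f i) - ⨅ i, g i ≤ c := by
    intro f g h
    rw [sub_le_comm]
    refine le_ciInf fun i => ?_
    linarith [ciInf_le (Set.finite_range f).bddBelow i, (abs_le.mp (h i)).2]
  exact abs_sub_le_iff.mpr ⟨key f g h, key g f fun i => abs_sub_comm (f i) (g i) ▸ h i⟩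

lemma abs_norm_sub_sq_sub_norm_sub_sq_le {E : Type*} [SeminormedAddCommGroup E] (y a b : E) :
    |‖y - a‖ ^ 2 - ‖y - b‖ ^ 2| ≤ (2 * ‖y‖ + ‖a‖ + ‖b‖) * ‖a - b‖ := by
  have hdiff : |‖y - a‖ - ‖y - b‖| ≤ ‖a - b‖ := by
    simpa [norm_sub_rev b a] using abs_norm_sub_norm_le (y - a) (y - b)
  have hsum : ‖y - a‖ + ‖y - b‖ ≤ 2 * ‖y‖ + ‖a‖ + ‖b‖ := by
    linarith [norm_sub_le y a, norm_sub_le y b]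
  rw [sq_sub_sq, abs_mul, abs_of_nonneg (by positivity : 0 ≤ ‖y - a‖ + ‖y - b‖)]
  gcongr

section QuantError

variable {ι E : Type*} [SeminormedAddCommGroup E]

noncomputable def quantError (z : ι → E) (y : E) : ℝ := ⨅ i, ‖y - z i‖ ^ 2

lemma measurable_quantError [Countable ι] [MeasurableSpace E] [OpensMeasurableSpace E]
    (z : ι → E) : Measurable (quantError z) :=
  Measurable.iInf fun i => (by fun_prop : Continuous fun y => ‖y - z i‖ ^ 2).measurable

lemma quantError_zero [Nonempty ι] (y : E) : quantError (0 : ι → E) y = ‖y‖ ^ 2 := by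
  simp [quantError]

variable [Fintype ι] [Nonempty ι]

lemma abs_quantError_sub_le (z w : ι → E) (y : E) :
    |quantError z y - quantError w y| ≤ (2 * ‖y‖ + ‖z‖ + ‖w‖) * dist z w := by
  refine abs_ciInf_sub_ciInf_le fun i =>
    (abs_norm_sub_sq_sub_norm_sub_sq_le y (z i) (w i)).trans ?_
  rw [← dist_eq_norm]
  gcongr
  · exact norm_le_pi_norm z i
  · exact norm_le_pi_norm w i
  · exact dist_le_pi_dist z w i

lemma abs_quantError_sub_le_mul (z w : ι → E) (y : E) :
    |quantError z y - quantError w y| ≤ (‖y‖ + 1) * ((2 + ‖z‖ + ‖w‖) * dist z w) := by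
  refine (abs_quantError_sub_le z w y).trans ?_
  rw [← mul_assoc]
  gcongr
  nlinarith [norm_nonneg y, norm_nonneg z, norm_nonneg w]

lemma integrable_quantError [MeasurableSpace E] [OpensMeasurableSpace E] {μ : Measure E}
    [IsFiniteMeasure μ] (h1 : Integrable (fun y => ‖y‖) μ) (h2 : Integrable (fun y => ‖y‖ ^ 2) μ)
    (z : ι → E) : Integrable (quantError z) μ := by
  refine Integrable.mono'
    (h2.add ((h1.add (integrable_const 1)).mul_const ((2 + ‖z‖ + ‖(0 : ι → E)‖) * dist z 0)))
    (measurable_quantError z).aestronglyMeasurable (Eventually.of_forall fun y => ?_)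
  have := abs_quantError_sub_le_mul z 0 y
  rw [quantError_zero] at this
  rw [Real.norm_eq_abs, Pi.add_apply, Pi.add_apply]
  linarith [abs_sub_abs_le_abs_sub (quantError z y) (‖y‖ ^ 2), abs_of_nonneg (sq_nonneg ‖y‖)]

lemma equicontinuousAt_cesaro_quantError {y : ℕ → E} {M : ℝ}
    (hM : ∀ n : ℕ, (n : ℝ)⁻¹ * ∑ i ∈ range n, (‖y i‖ + 1) ≤ M) (x : ι → E) :
    EquicontinuousAt
      (fun (n : ℕ) (w : ι → E) => (n : ℝ)⁻¹ * ∑ i ∈ range n, quantError w (y i)) x := by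
  refine Metric.equicontinuousAt_of_continuity_modulus
    (fun w => M * ((2 + ‖x‖ + ‖w‖) * dist x w)) ?_ _ (Eventually.of_forall fun w n => ?_)
  · have : Continuous fun w => M * ((2 + ‖x‖ + ‖w‖) * dist x w) := by fun_prop
    simpa using this.tendsto x
  calc dist ((n : ℝ)⁻¹ * ∑ i ∈ range n, quantError x (y i))
        ((n : ℝ)⁻¹ * ∑ i ∈ range n, quantError w (y i))
      = (n : ℝ)⁻¹ * |∑ i ∈ range n, (quantError x (y i) - quantError w (y i))| := by
        rw [Real.dist_eq, ← mul_sub, ← sum_sub_distrib, abs_mul, abs_of_nonneg (by positivity)]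
    _ ≤ (n : ℝ)⁻¹ * ∑ i ∈ range n, (‖y i‖ + 1) * ((2 + ‖x‖ + ‖w‖) * dist x w) := by
        gcongr
        exact (abs_sum_le_sum_abs _ _).trans
          (sum_le_sum fun i _ => abs_quantError_sub_le_mul x w (y i))
    _ = ((n : ℝ)⁻¹ * ∑ i ∈ range n, (‖y i‖ + 1)) * ((2 + ‖x‖ + ‖w‖) * dist x w) := by
        rw [← sum_mul, mul_assoc]
    _ ≤ M * ((2 + ‖x‖ + ‖w‖) * dist x w) := by gcongr; exact hM n

theorem tendsto_cesaro_quantError {y : ℕ → E} {m : ℝ} {s : Set (ι → E)} (hs : Dense s)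
    {G : (ι → E) → ℝ} {x : ι → E} {z : ℕ → ι → E}
    (hm : Tendsto (fun n : ℕ => (n : ℝ)⁻¹ * ∑ i ∈ range n, ‖y i‖) atTop (𝓝 m))
    (hsG : ∀ w ∈ s, Tendsto (fun n : ℕ => (n : ℝ)⁻¹ * ∑ i ∈ range n, quantError w (y i))
      atTop (𝓝 (G w)))
    (hG : ContinuousAt G x) (hz : Tendsto z atTop (𝓝 x)) :
    Tendsto (fun n : ℕ => (n : ℝ)⁻¹ * ∑ i ∈ range n, quantError (z i) (y i)) atTop (𝓝 (G x)) := by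
  have hweight : Tendsto (fun n : ℕ => (n : ℝ)⁻¹ * ∑ i ∈ range n, (‖y i‖ + 1)) atTop
      (𝓝 (m + 1)) := by
    simpa only [sum_add_distrib, mul_add] using hm.add (tendsto_const_nhds (x := (1 : ℝ))).cesaro
  obtain ⟨M, hM⟩ := hweight.bddAbove_range
  have hfixed : Tendsto (fun n : ℕ => (n : ℝ)⁻¹ * ∑ i ∈ range n, quantError x (y i)) atTop
      (𝓝 (G x)) :=
    (equicontinuousAt_cesaro_quantError (fun n => hM ⟨n, rfl⟩) x).tendsto_of_mem_closure
      (hG.mono_left nhdsWithin_le_nhds) hsG (hs x)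
  have hdist : Tendsto (fun i => (2 + ‖z i‖ + ‖x‖) * dist (z i) x) atTop (𝓝 0) := by
    simpa using ((tendsto_const_nhds.add hz.norm).add tendsto_const_nhds).mul
      (tendsto_iff_dist_tendsto_zero.mp hz)
  have hmoving : Tendsto (fun n : ℕ => (n : ℝ)⁻¹ *
      ∑ i ∈ range n, (quantError (z i) (y i) - quantError x (y i))) atTop (𝓝 0) := by
    refine tendsto_cesaro_zero_of_isLittleO (fun i => le_add_of_nonneg_left (norm_nonneg _))
      hweight ?_
    refine IsBigO.trans_isLittleO (IsBigO.of_bound' (Eventually.of_forall fun i => ?_))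
      (((isBigO_refl _ _).mul_isLittleO ((isLittleO_one_iff ℝ).2 hdist)).congr_right
        (fun i => mul_one (‖y i‖ + 1)))
    rw [Real.norm_eq_abs, Real.norm_eq_abs]
    exact (abs_quantError_sub_le_mul _ _ _).trans (le_abs_self _)
  simpa only [mul_sub, sum_sub_distrib, add_sub_cancel, add_zero] using hfixed.add hmoving

theorem ae_tendsto_cesaro_quantError [MeasurableSpace E] [OpensMeasurableSpace E]
    [TopologicalSpace.SeparableSpace E] {Ω : Type*} [MeasurableSpace Ω] {P : Measure Ω}
    {μ : Measure E} [IsFiniteMeasure μ] {X : ℕ → Ω → E} (hXmeas : ∀ i, Measurable (X i))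
    (hXindep : iIndepFun X P) (hXlaw : ∀ i, P.map (X i) = μ)
    (h1 : Integrable (fun y => ‖y‖) μ) (h2 : Integrable (fun y => ‖y‖ ^ 2) μ) :
    ∀ᵐ ω ∂P, ∀ x : ι → E, ContinuousAt (fun z => ∫ y, quantError z y ∂μ) x →
      ∀ z : ℕ → ι → E, Tendsto z atTop (𝓝 x) →
      Tendsto (fun n : ℕ => (n : ℝ)⁻¹ * ∑ i ∈ range n, quantError (z i) (X i ω)) atTop
        (𝓝 (∫ y, quantError x y ∂μ)) := by
  obtain ⟨s, hsc, hsd⟩ := TopologicalSpace.exists_countable_dense (ι → E)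
  have hnorm := strong_law_ae_comp hXmeas hXindep hXlaw continuous_norm.measurable h1
  have hgrid : ∀ᵐ ω ∂P, ∀ w ∈ s, Tendsto
      (fun n : ℕ => (n : ℝ)⁻¹ * ∑ i ∈ range n, quantError w (X i ω)) atTop
      (𝓝 (∫ y, quantError w y ∂μ)) :=
    (ae_ball_iff hsc).2 fun w _ => strong_law_ae_comp hXmeas hXindep hXlaw
      (measurable_quantError w) (integrable_quantError h1 h2 w)
  filter_upwards [hnorm, hgrid] with ω hnormω hgridω
  exact fun x hG z hz => tendsto_cesaro_quantError hsd hnormω hgridω hG hz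

end QuantError

theorem stmt17_general (d K : ℕ) (hK : 1 ≤ K) (η : ℝ) (hη : 0 < η)
    (μ : Measure (EuclideanSpace ℝ (Fin d))) [IsProbabilityMeasure μ]
    (hμmom : Integrable (fun y => ‖y‖ ^ ((2 : ℝ) + η)) μ)
    (Ω : Type*) [MeasurableSpace Ω] (P : Measure Ω)
    (X : ℕ → Ω → EuclideanSpace ℝ (Fin d))
    (hXmeas : ∀ i, Measurable (X i))
    (hXindep : ProbabilityTheory.iIndepFun X P)
    (hXlaw : ∀ i, P.map (X i) = μ)
    (xs : ℕ → Ω → Fin K → EuclideanSpace ℝ (Fin d)) :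
    ∀ᵐ ω ∂P, ∀ xstar : Fin K → EuclideanSpace ℝ (Fin d),
      Function.Injective xstar →
      HasFDerivAt (fun z : Fin K → EuclideanSpace ℝ (Fin d) => distortion μ K z)
        (0 : (Fin K → EuclideanSpace ℝ (Fin d)) →L[ℝ] ℝ) xstar →
      Tendsto (fun i => xs i ω) atTop (nhds xstar) →
      Tendsto (fun t : ℕ =>
          (1 / (t : ℝ)) * ∑ i ∈ Finset.Icc 1 t, ⨅ k : Fin K, ‖X i ω - xs i ω k‖ ^ 2)
        atTop (nhds (distortion μ K xstar)) := by
  have : Nonempty (Fin K) := ⟨⟨0, hK⟩⟩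
  have hmoment : ∀ p : ℝ, 0 ≤ p → p ≤ 2 → Integrable (fun y => ‖y‖ ^ p) μ := fun p hp hp2 =>
    integrable_norm_rpow_of_le aestronglyMeasurable_id hp (by positivity) (by linarith) hμmom
  have h1 : Integrable (fun y : EuclideanSpace ℝ (Fin d) => ‖y‖) μ := by
    simpa using hmoment 1 zero_le_one one_le_two
  have h2 : Integrable (fun y : EuclideanSpace ℝ (Fin d) => ‖y‖ ^ 2) μ := by
    simpa using hmoment 2 zero_le_two le_rfl
  -- `Icc 1 t` starts at index 1, so the law of large numbers is applied to the shifted samples.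
  filter_upwards [ae_tendsto_cesaro_quantError (ι := Fin K) (fun i => hXmeas (i + 1))
    (hXindep.precomp (add_left_injective 1)) (fun i => hXlaw (i + 1)) h1 h2]
    with ω hω xstar _ hderiv hconv
  refine (hω xstar hderiv.continuousAt (fun i => xs (i + 1) ω)
    (hconv.comp (tendsto_add_atTop_nat 1))).congr fun t => ?_
  rw [one_div, range_eq_Ico, sum_Ico_add' (fun i => quantError (xs i ω) (X i ω)) 0 t 1, zero_add,
    Ico_add_one_right_eq_Icc]
  rfl

theorem stmt17 (d K : ℕ) (hd : 1 ≤ d) (hK : 1 ≤ K) (η δ : ℝ) (hη : 0 < η) (hδ : 0 < δ)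
    (μ : Measure (EuclideanSpace ℝ (Fin d))) [IsProbabilityMeasure μ]
    (hμmom : Integrable (fun y => ‖y‖ ^ ((2 : ℝ) + η)) μ)
    (hμH : NullOnHyperplanes μ)
    (Ω : Type*) [MeasurableSpace Ω] (P : Measure Ω) [IsProbabilityMeasure P]
    (X : ℕ → Ω → EuclideanSpace ℝ (Fin d))
    (hXmeas : ∀ i, Measurable (X i))
    (hXindep : ProbabilityTheory.iIndepFun X P)
    (hXlaw : ∀ i, P.map (X i) = μ)
    (γ : ℕ → ℝ) (hγ : ∀ i, γ i ∈ Set.Ioo (0 : ℝ) 1)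
    (hγdiv : Tendsto (fun n => ∑ i ∈ Finset.range n, γ i) atTop atTop)
    (hγsum : Summable (fun i => γ i ^ ((1 : ℝ) + δ)))
    (x0 : Fin K → EuclideanSpace ℝ (Fin d)) (hx0 : Function.Injective x0)
    (xs : ℕ → Ω → Fin K → EuclideanSpace ℝ (Fin d))
    (kwin : ℕ → Ω → Fin K)
    (hxs0 : ∀ ω, xs 0 ω = x0)
    (hkwin : ∀ i ω,
      (∀ k, ‖X i ω - xs i ω (kwin i ω)‖ ≤ ‖X i ω - xs i ω k‖) ∧
      (∀ j, j < kwin i ω → ‖X i ω - xs i ω (kwin i ω)‖ < ‖X i ω - xs i ω j‖))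
    (hxsucc : ∀ i ω k, xs (i + 1) ω k =
      if k = kwin i ω then (1 - γ i) • xs i ω k + γ i • X i ω else xs i ω k)
    (hconv : ∀ᵐ ω ∂P, ∃ xstar : Fin K → EuclideanSpace ℝ (Fin d),
      Function.Injective xstar ∧
      HasFDerivAt (fun z : Fin K → EuclideanSpace ℝ (Fin d) => distortion μ K z)
        (0 : (Fin K → EuclideanSpace ℝ (Fin d)) →L[ℝ] ℝ) xstar ∧
      Tendsto (fun i => xs i ω) atTop (nhds xstar)) :
    ∀ᵐ ω ∂P, ∀ xstar : Fin K → EuclideanSpace ℝ (Fin d),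
      Function.Injective xstar →
      HasFDerivAt (fun z : Fin K → EuclideanSpace ℝ (Fin d) => distortion μ K z)
        (0 : (Fin K → EuclideanSpace ℝ (Fin d)) →L[ℝ] ℝ) xstar →
      Tendsto (fun i => xs i ω) atTop (nhds xstar) →
      Tendsto (fun t : ℕ =>
          (1 / (t : ℝ)) * ∑ i ∈ Finset.Icc 1 t, ⨅ k : Fin K, ‖X i ω - xs i ω k‖ ^ 2)
        atTop (nhds (distortion μ K xstar)) :=
  stmt17_general d K hK η hη μ hμmom Ω P X hXmeas hXindep hXlaw xs
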